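/- arXiv:2102.04094 — 3 statements merged into one kernel-verified Lean document; each statement's English description precedes it below -/
import Mathlib

section
/- For every integer a ≥ 2, β_b(C(2a+1;1,a)) = a − 1 if a = 2 or a ≡ 4 (mod 6), and β_b(C(2a+1;1,a)) = 2(⌈a/2⌉ − 1) otherwise. -/
/-- The eccentricity of a vertex: maximum distance to any other vertex. -/
noncomputable def eccent {V : Type*} [Fintype V] (G : SimpleGraph V) (v : V) : ℕ :=
  Finset.univ.sup (fun u => G.dist v u)

/-- The diameter of a finite graph: maximum eccentricity. -/
noncomputable def graphDiam {V : Type*} [Fintype V] (G : SimpleGraph V) : ℕ :=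
  Finset.univ.sup (fun v => eccent G v)

/-- `f` is an independent broadcast on `G`. -/
def IsIndepBroadcast {V : Type*} [Fintype V] (G : SimpleGraph V) (f : V → ℕ) : Prop :=
  (∀ v, f v ≤ eccent G v) ∧
  ∀ u v : V, u ≠ v → 0 < f u → 0 < f v → max (f u) (f v) < G.dist u v

/-- The broadcast independence number: maximum cost of an independent broadcast. -/
noncomputable def betaB {V : Type*} [Fintype V] (G : SimpleGraph V) : ℕ :=
  sSup {k | ∃ f : V → ℕ, IsIndepBroadcast G f ∧ ∑ v, f v = k}

/-- The independence number: maximum size of an independent set. -/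
noncomputable def alphaNum {V : Type*} [Fintype V] (G : SimpleGraph V) : ℕ :=
  sSup {k | ∃ s : Finset V, (∀ u ∈ s, ∀ v ∈ s, ¬ G.Adj u v) ∧ s.card = k}

/-- The circulant graph `C(n;1,a)` on vertices `v_0,…,v_{n-1}` with edges
`v_i v_{i+1}` and `v_i v_{i+a}`, indices mod `n`. -/
def circulantGraph (n a : ℕ) : SimpleGraph (Fin n) :=
  SimpleGraph.fromRel (fun i j => (i.val + 1) % n = j.val ∨ (i.val + a) % n = j.val)


namespace S15

def dd (a : ℕ) (u v : Fin (2*a+1)) : ℕ := (2 * (2*a+1 + v.val - u.val)) % (2*a+1)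
def cdist (a : ℕ) (u v : Fin (2*a+1)) : ℕ := min (dd a u v) (2*a+1 - dd a u v)

variable {a : ℕ}

lemma mod_eq_of' {s t : ℕ} (h : t < 2*a+1) (hk : ∃ k, s = t + k*(2*a+1)) :
    s % (2*a+1) = t := by
  obtain ⟨k, rfl⟩ := hk
  simp [Nat.add_mul_mod_self_right, Nat.mod_eq_of_lt h]

lemma dd_rel (u v : Fin (2*a+1)) :
    ∃ k ≤ 3, 2*(2*a+1 + v.val - u.val) = dd a u v + k*(2*a+1) := by
  have hu := u.isLt; have hv := v.isLt
  refine ⟨2*(2*a+1 + v.val - u.val) / (2*a+1), ?_, ?_⟩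
  · have := (Nat.div_lt_iff_lt_mul (show 0 < 2*a+1 by omega)).2 (by omega :
      2*(2*a+1 + v.val - u.val) < 4 * (2*a+1))
    omega
  · exact (Nat.mod_add_div' (2*(2*a+1 + v.val - u.val)) (2*a+1)).symm

lemma adj_iff {u v : Fin (2*a+1)} :
    (circulantGraph (2*a+1) a).Adj u v ↔ u ≠ v ∧
      ((u.val + 1) % (2*a+1) = v.val ∨ (u.val + a) % (2*a+1) = v.val ∨
       (v.val + 1) % (2*a+1) = u.val ∨ (v.val + a) % (2*a+1) = u.val) := by
  simp [circulantGraph, SimpleGraph.fromRel_adj]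
  tauto

lemma adj_of_succ (ha : 2 ≤ a) {u v : Fin (2*a+1)} (h : (u.val + 1) % (2*a+1) = v.val) :
    (circulantGraph (2*a+1) a).Adj u v := by
  have hu := u.isLt; have hv := v.isLt
  rw [adj_iff]
  refine ⟨?_, Or.inl h⟩
  rcases Nat.lt_or_ge (u.val+1) (2*a+1) with h1 | h1
  · rw [Nat.mod_eq_of_lt h1] at h
    intro he; rw [he] at h; omega
  · rw [Nat.mod_eq_sub_mod h1, Nat.mod_eq_of_lt (by omega)] at h
    intro he; rw [he] at h; omega

lemma adj_of_a (ha : 2 ≤ a) {u v : Fin (2*a+1)} (h : (u.val + a) % (2*a+1) = v.val) :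
    (circulantGraph (2*a+1) a).Adj u v := by
  have hu := u.isLt; have hv := v.isLt
  rw [adj_iff]
  refine ⟨?_, Or.inr (Or.inl h)⟩
  rcases Nat.lt_or_ge (u.val+a) (2*a+1) with h1 | h1
  · rw [Nat.mod_eq_of_lt h1] at h
    intro he; rw [he] at h; omega
  · rw [Nat.mod_eq_sub_mod h1, Nat.mod_eq_of_lt (by omega)] at h
    intro he; rw [he] at h; omega

lemma cdist_adj (ha : 2 ≤ a) {u v : Fin (2*a+1)}
    (h : (circulantGraph (2*a+1) a).Adj u v) : cdist a u v ≤ 2 := by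
  have hu := u.isLt; have hv := v.isLt
  rw [adj_iff] at h
  obtain ⟨hne, h⟩ := h
  have key : dd a u v = 1 ∨ dd a u v = 2 ∨ dd a u v = 2*a ∨ dd a u v = 2*a - 1 := by
    rcases h with h | h | h | h
    · rcases Nat.lt_or_ge (u.val+1) (2*a+1) with h1 | h1
      · rw [Nat.mod_eq_of_lt h1] at h
        right; left; exact mod_eq_of' (by omega) ⟨2, by omega⟩
      · rw [Nat.mod_eq_sub_mod h1, Nat.mod_eq_of_lt (by omega)] at h
        right; left; exact mod_eq_of' (by omega) ⟨0, by omega⟩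
    · rcases Nat.lt_or_ge (u.val+a) (2*a+1) with h1 | h1
      · rw [Nat.mod_eq_of_lt h1] at h
        right; right; left; exact mod_eq_of' (by omega) ⟨2, by omega⟩
      · rw [Nat.mod_eq_sub_mod h1, Nat.mod_eq_of_lt (by omega)] at h
        right; right; left; exact mod_eq_of' (by omega) ⟨0, by omega⟩
    · rcases Nat.lt_or_ge (v.val+1) (2*a+1) with h1 | h1
      · rw [Nat.mod_eq_of_lt h1] at h
        right; right; right; exact mod_eq_of' (by omega) ⟨1, by omega⟩
      · rw [Nat.mod_eq_sub_mod h1, Nat.mod_eq_of_lt (by omega)] at h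
        right; right; right; exact mod_eq_of' (by omega) ⟨3, by omega⟩
    · rcases Nat.lt_or_ge (v.val+a) (2*a+1) with h1 | h1
      · rw [Nat.mod_eq_of_lt h1] at h
        left; exact mod_eq_of' (by omega) ⟨1, by omega⟩
      · rw [Nat.mod_eq_sub_mod h1, Nat.mod_eq_of_lt (by omega)] at h
        left; exact mod_eq_of' (by omega) ⟨3, by omega⟩
  unfold cdist
  omega


variable {a : ℕ}

lemma dd_lt (u v : Fin (2*a+1)) : dd a u v < 2*a+1 := Nat.mod_lt _ (by omega)

lemma dd_self (u : Fin (2*a+1)) : dd a u u = 0 := by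
  have := u.isLt
  unfold dd
  have h : 2*a+1 + u.val - u.val = 2*a+1 := by omega
  rw [h]
  simp [Nat.mul_mod_right]

lemma dd_add (u v w : Fin (2*a+1)) : (dd a u v + dd a v w) % (2*a+1) = dd a u w := by
  have hu := u.isLt; have hv := v.isLt; have hw := w.isLt
  unfold dd
  rw [← Nat.add_mod]
  have h : 2 * (2*a+1 + v.val - u.val) + 2 * (2*a+1 + w.val - v.val)
      = 2 * (2*a+1 + w.val - u.val) + (2*a+1) * 2 := by omega
  rw [h, Nat.add_mul_mod_self_left]

lemma add_cases {p q r : ℕ} (hp : p < 2*a+1) (hq : q < 2*a+1) (hr : r < 2*a+1)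
    (h : (p + q) % (2*a+1) = r) : p + q = r ∨ p + q = r + (2*a+1) := by
  rcases Nat.lt_or_ge (p+q) (2*a+1) with h1 | h1
  · rw [Nat.mod_eq_of_lt h1] at h; omega
  · rw [Nat.mod_eq_sub_mod h1, Nat.mod_eq_of_lt (by omega)] at h; omega

lemma cdist_tri (u v w : Fin (2*a+1)) : cdist a u w ≤ cdist a u v + cdist a v w := by
  have h := add_cases (dd_lt u v) (dd_lt v w) (dd_lt u w) (dd_add u v w)
  unfold cdist
  have h1 := dd_lt u v; have h2 := dd_lt v w; have h3 := dd_lt u w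
  omega

lemma cdist_comm (u v : Fin (2*a+1)) : cdist a u v = cdist a v u := by
  have h := add_cases (dd_lt u v) (dd_lt v u) (by omega : (0:ℕ) < 2*a+1)
    (by rw [dd_add, dd_self])
  unfold cdist
  omega

lemma cdist_le (u v : Fin (2*a+1)) : cdist a u v ≤ a := by
  have := dd_lt u v; unfold cdist; omega

lemma eq_of_cdist_eq_zero (hu2 : 2 ≤ a) (u v : Fin (2*a+1)) (h : cdist a u v = 0) : u = v := by
  have hd : dd a u v = 0 := by unfold cdist at h; have := dd_lt u v; omega
  unfold dd at hd
  have hu := u.isLt; have hv := v.isLt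
  obtain ⟨k, hk⟩ := Nat.dvd_of_mod_eq_zero hd
  have hk4 : k < 4 := by
    by_contra hc
    have : (2*a+1) * 4 ≤ (2*a+1) * k := Nat.mul_le_mul_left _ (by omega)
    omega
  interval_cases k <;> [skip; skip; skip; skip] <;> omega



variable {a : ℕ}

lemma dd_eq_two (ha : 2 ≤ a) {u v : Fin (2*a+1)} (h : v.val = (u.val+1)%(2*a+1)) :
    dd a u v = 2 := by
  have hu := u.isLt
  unfold dd
  rcases Nat.lt_or_ge (u.val+1) (2*a+1) with h1 | h1
  · rw [Nat.mod_eq_of_lt h1] at h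
    rw [h]; exact mod_eq_of' (by omega) ⟨2, by omega⟩
  · rw [Nat.mod_eq_sub_mod h1, Nat.mod_eq_of_lt (by omega)] at h
    rw [h]; exact mod_eq_of' (by omega) ⟨0, by omega⟩

lemma dd_eq_nsub2 (ha : 2 ≤ a) {u v : Fin (2*a+1)} (h : v.val = (u.val+2*a)%(2*a+1)) :
    dd a u v = 2*a-1 := by
  have hu := u.isLt
  unfold dd
  rcases Nat.lt_or_ge (u.val+2*a) (2*a+1) with h1 | h1
  · rw [Nat.mod_eq_of_lt h1] at h
    rw [h]; exact mod_eq_of' (by omega) ⟨3, by omega⟩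
  · rw [Nat.mod_eq_sub_mod h1, Nat.mod_eq_of_lt (by omega)] at h
    rw [h]; exact mod_eq_of' (by omega) ⟨1, by omega⟩

lemma succ_pred (u : Fin (2*a+1)) :
    (((u.val+2*a)%(2*a+1)) + 1) % (2*a+1) = u.val := by
  have hu := u.isLt
  rcases Nat.lt_or_ge (u.val+2*a) (2*a+1) with h|h
  · rw [Nat.mod_eq_of_lt h]; exact mod_eq_of' hu ⟨1, by omega⟩
  · have h2 : (u.val+2*a)%(2*a+1) = u.val+2*a-(2*a+1) := by
      rw [Nat.mod_eq_sub_mod h]; exact Nat.mod_eq_of_lt (by omega)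
    rw [h2]; exact mod_eq_of' hu ⟨0, by omega⟩

lemma adj_of_dd_one (ha : 2 ≤ a) {u v : Fin (2*a+1)} (h : dd a u v = 1) :
    (circulantGraph (2*a+1) a).Adj u v := by
  have hu := u.isLt; have hv := v.isLt
  obtain ⟨k, hk, he⟩ := dd_rel u v
  rw [h] at he
  refine ((adj_of_a ha (show (v.val + a) % (2*a+1) = u.val from ?_))).symm
  interval_cases k
  · omega
  · exact mod_eq_of' hu ⟨0, by omega⟩
  · omega
  · exact mod_eq_of' hu ⟨1, by omega⟩

lemma adj_of_dd_2a (ha : 2 ≤ a) {u v : Fin (2*a+1)} (h : dd a u v = 2*a) :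
    (circulantGraph (2*a+1) a).Adj u v := by
  have hu := u.isLt; have hv := v.isLt
  obtain ⟨k, hk, he⟩ := dd_rel u v
  rw [h] at he
  refine adj_of_a ha (show (u.val + a) % (2*a+1) = v.val from ?_)
  interval_cases k
  · exact mod_eq_of' hv ⟨1, by omega⟩
  · omega
  · exact mod_eq_of' hv ⟨0, by omega⟩
  · omega

lemma exists_walk (ha : 2 ≤ a) : ∀ m : ℕ, ∀ u v : Fin (2*a+1), cdist a u v = m →
    ∃ p : (circulantGraph (2*a+1) a).Walk u v, 2 * p.length ≤ m + 1 := by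
  intro m
  induction m using Nat.strong_induction_on with
  | _ m IH =>
  intro u v hm
  rcases Nat.eq_zero_or_pos m with rfl | hpos
  · obtain rfl := eq_of_cdist_eq_zero ha u v hm
    exact ⟨.nil, by simp⟩
  have hdlt := dd_lt u v
  have hma : m ≤ a := hm ▸ cdist_le u v
  have hcd : dd a u v = m ∨ dd a u v = 2*a+1 - m := by unfold cdist at hm; omega
  rcases hcd with hd | hd
  · rcases Nat.lt_or_ge m 2 with h1 | h2
    · have h1' : dd a u v = 1 := by omega
      exact ⟨.cons (adj_of_dd_one ha h1') .nil, by simp; omega⟩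
    · set w : Fin (2*a+1) := ⟨(u.val+1)%(2*a+1), Nat.mod_lt _ (by omega)⟩ with hw
      have hadj : (circulantGraph (2*a+1) a).Adj u w := adj_of_succ ha rfl
      have h2' : dd a u w = 2 := dd_eq_two ha rfl
      have hc := dd_add u w v
      rw [h2', hd] at hc
      have hwv := dd_lt w v
      have hq : dd a w v = m - 2 := by
        rcases add_cases (by omega) hwv (by omega) hc with h' | h' <;> omega
      have hcw : cdist a w v = m - 2 := by unfold cdist; omega
      obtain ⟨p, hp⟩ := IH (m-2) (by omega) w v hcw
      exact ⟨.cons hadj p, by simp only [SimpleGraph.Walk.length_cons]; omega⟩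
  · rcases Nat.lt_or_ge m 2 with h1 | h2
    · have h1' : dd a u v = 2*a := by omega
      exact ⟨.cons (adj_of_dd_2a ha h1') .nil, by simp; omega⟩
    · set w : Fin (2*a+1) := ⟨(u.val+2*a)%(2*a+1), Nat.mod_lt _ (by omega)⟩ with hw
      have hadj : (circulantGraph (2*a+1) a).Adj u w :=
        (adj_of_succ ha (succ_pred u)).symm
      have h2' : dd a u w = 2*a-1 := dd_eq_nsub2 ha rfl
      have hc := dd_add u w v
      rw [h2', hd] at hc
      have hwv := dd_lt w v
      rcases add_cases (by omega) hwv (by omega) hc with h' | h'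
      · have hwv0 : w = v := eq_of_cdist_eq_zero ha w v (by unfold cdist; omega)
        rw [hwv0] at hadj
        exact ⟨.cons hadj .nil, by simp; omega⟩
      · have hcw : cdist a w v = m - 2 := by unfold cdist; omega
        obtain ⟨p, hp⟩ := IH (m-2) (by omega) w v hcw
        exact ⟨.cons hadj p, by simp only [SimpleGraph.Walk.length_cons]; omega⟩

lemma connected (ha : 2 ≤ a) : (circulantGraph (2*a+1) a).Connected := by
  rw [SimpleGraph.connected_iff]
  exact ⟨fun u v => ⟨(exists_walk ha _ u v rfl).choose⟩, ⟨⟨0, by omega⟩⟩⟩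

lemma cdist_le_two_len (ha : 2 ≤ a) {u v : Fin (2*a+1)}
    (p : (circulantGraph (2*a+1) a).Walk u v) : cdist a u v ≤ 2*p.length := by
  induction p with
  | nil => simp [cdist, dd_self]
  | @cons u w v h p ih =>
    have h1 := cdist_tri u w v
    have h2 := cdist_adj ha h
    simp only [SimpleGraph.Walk.length_cons]
    omega

lemma dist_eq (ha : 2 ≤ a) (u v : Fin (2*a+1)) :
    (circulantGraph (2*a+1) a).dist u v = (cdist a u v + 1)/2 := by
  refine le_antisymm ?_ ?_
  · obtain ⟨p, hp⟩ := exists_walk ha _ u v rfl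
    have := SimpleGraph.dist_le p
    omega
  · obtain ⟨p, hp⟩ := (connected ha).exists_walk_length_eq_dist u v
    have := cdist_le_two_len ha p
    omega

variable {a : ℕ}

lemma exists_half (ha : 2 ≤ a) : ∃ c < 2*a+1, (2*c) % (2*a+1) = a := by
  rcases Nat.even_or_odd a with ⟨b, rfl⟩ | ⟨b, rfl⟩
  · refine ⟨b, by omega, ?_⟩
    exact mod_eq_of' (by omega) ⟨0, by omega⟩
  · refine ⟨b+(2*b+1)+1, by omega, ?_⟩
    exact mod_eq_of' (by omega) ⟨1, by omega⟩

lemma exists_far (ha : 2 ≤ a) (v : Fin (2*a+1)) : ∃ u : Fin (2*a+1), cdist a v u = a := by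
  obtain ⟨c, hc, hc2⟩ := exists_half ha
  have hv := v.isLt
  refine ⟨⟨(v.val + c) % (2*a+1), Nat.mod_lt _ (by omega)⟩, ?_⟩
  have hdd : dd a v ⟨(v.val + c) % (2*a+1), Nat.mod_lt _ (by omega)⟩ = a := by
    unfold dd
    simp only []
    rcases Nat.lt_or_ge (v.val + c) (2*a+1) with h1 | h1
    · rw [Nat.mod_eq_of_lt h1]
      have h3 : 2 * (2*a+1 + (v.val + c) - v.val) = 2*c + (2*a+1)*2 := by omega
      rw [h3, Nat.add_mul_mod_self_left]
      exact hc2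
    · have h4 : (v.val + c) % (2*a+1) = v.val + c - (2*a+1) := by
        rw [Nat.mod_eq_sub_mod h1]; exact Nat.mod_eq_of_lt (by omega)
      rw [h4]
      have h3 : 2 * (2*a+1 + (v.val + c - (2*a+1)) - v.val) = 2*c := by omega
      rw [h3, hc2]
  unfold cdist
  rw [hdd]
  omega

lemma eccent_eq (ha : 2 ≤ a) (v : Fin (2*a+1)) :
    eccent (circulantGraph (2*a+1) a) v = (a+1)/2 := by
  unfold eccent
  apply le_antisymm
  · apply Finset.sup_le
    intro u _
    rw [dist_eq ha]
    have := cdist_le v u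
    omega
  · obtain ⟨u, hu⟩ := exists_far ha v
    have h1 : (circulantGraph (2*a+1) a).dist v u = (a+1)/2 := by
      rw [dist_eq ha, hu]
    calc (a+1)/2 = (circulantGraph (2*a+1) a).dist v u := h1.symm
    _ ≤ _ := Finset.le_sup (Finset.mem_univ u)

lemma lt_dist_iff (ha : 2 ≤ a) {u v : Fin (2*a+1)} {M : ℕ} :
    M < (circulantGraph (2*a+1) a).dist u v ↔ 2*M+1 ≤ cdist a u v := by
  rw [dist_eq ha]; omega

variable {a : ℕ}

def Iv (a : ℕ) (f : Fin (2*a+1) → ℕ) (u : Fin (2*a+1)) : Finset (Fin (2*a+1)) :=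
  (Finset.range (2*f u+1)).image
    (fun j => (⟨(2*u.val + (2*a+1 - f u) + j) % (2*a+1), Nat.mod_lt _ (by omega)⟩ :
      Fin (2*a+1)))

lemma exists_wit (s : ℕ) (hs : s < 4*(2*a+1)) :
    ∃ k ≤ 3, s = s % (2*a+1) + k*(2*a+1) := by
  refine ⟨s/(2*a+1), ?_, (Nat.mod_add_div' s (2*a+1)).symm⟩
  have := (Nat.div_lt_iff_lt_mul (show 0 < 2*a+1 by omega)).2 (by omega : s < 4*(2*a+1))
  omega

lemma mem_Iv {f : Fin (2*a+1) → ℕ} {x u : Fin (2*a+1)} :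
    x ∈ Iv a f u ↔ ∃ j ≤ 2 * f u, x.val = (2*u.val + (2*a+1 - f u) + j) % (2*a+1) := by
  unfold Iv
  simp only [Finset.mem_image, Finset.mem_range]
  constructor
  · rintro ⟨j, hj, rfl⟩
    exact ⟨j, by omega, rfl⟩
  · rintro ⟨j, hj, hx⟩
    exact ⟨j, by omega, by apply Fin.ext; simp [hx]⟩

lemma card_Iv (f : Fin (2*a+1) → ℕ) (u : Fin (2*a+1)) (hf : f u ≤ a) :
    (Iv a f u).card = 2 * f u + 1 := by
  unfold Iv
  rw [Finset.card_image_of_injOn, Finset.card_range]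
  intro j hj j' hj' he
  simp only [Finset.coe_range, Set.mem_Iio] at hj hj'
  have h1 : (2*u.val + (2*a+1 - f u) + j) % (2*a+1)
      = (2*u.val + (2*a+1 - f u) + j') % (2*a+1) := congrArg Fin.val he
  have h2 : j ≡ j' [MOD 2*a+1] := Nat.ModEq.add_left_cancel' _ h1
  unfold Nat.ModEq at h2
  rw [Nat.mod_eq_of_lt (by omega), Nat.mod_eq_of_lt (by omega)] at h2
  exact h2

lemma cdist_le_core {u v : Fin (2*a+1)} {p q j j' : ℕ} (hp : p ≤ a+1) (hq : q ≤ a+1)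
    (hj : j ≤ 2*p) (hj' : j' ≤ 2*q)
    (h : (2*u.val + (2*a+1 - p) + j) % (2*a+1) = (2*v.val + (2*a+1 - q) + j') % (2*a+1)) :
    cdist a u v ≤ p + q := by
  have hu := u.isLt; have hv := v.isLt
  obtain ⟨k1, hk1, he1⟩ := dd_rel u v
  obtain ⟨k2, hk2, he2⟩ := exists_wit (a:=a) (2*u.val + (2*a+1 - p) + j) (by omega)
  obtain ⟨k3, hk3, he3⟩ := exists_wit (a:=a) (2*v.val + (2*a+1 - q) + j') (by omega)
  rw [h] at he2
  have hdd := dd_lt u v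
  unfold cdist
  interval_cases k1 <;> interval_cases k2 <;> interval_cases k3 <;> omega

variable {a : ℕ}
open Finset

lemma broadcast_facts (ha : 2 ≤ a) {f : Fin (2*a+1) → ℕ}
    (hb : IsIndepBroadcast (circulantGraph (2*a+1) a) f) :
    (∀ u, f u ≤ (a+1)/2) ∧
    (∀ u v : Fin (2*a+1), u ≠ v → 0 < f u → 0 < f v →
      2 * max (f u) (f v) + 1 ≤ cdist a u v) := by
  constructor
  · intro u; have := hb.1 u; rwa [eccent_eq ha] at this
  · intro u v hne hu hv
    have := hb.2 u v hne hu hv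
    rwa [lt_dist_iff ha] at this

lemma sum_eq_filter (f : Fin (2*a+1) → ℕ) :
    ∑ v, f v = ∑ v ∈ Finset.univ.filter (fun u => 0 < f u), f v := by
  symm; apply Finset.sum_subset (Finset.filter_subset _ _)
  intro x _ hx
  simp only [Finset.mem_filter, Finset.mem_univ, true_and] at hx
  omega

lemma disj_Iv (ha : 2 ≤ a) {f : Fin (2*a+1) → ℕ} (hf : ∀ u, f u ≤ (a+1)/2)
    (K : ∀ u v : Fin (2*a+1), u ≠ v → 0 < f u → 0 < f v →
      2 * max (f u) (f v) + 1 ≤ cdist a u v)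
    {u v : Fin (2*a+1)} (hu : 0 < f u) (hv : 0 < f v) (hne : u ≠ v) :
    Disjoint (Iv a f u) (Iv a f v) := by
  rw [Finset.disjoint_left]
  intro x hxu hxv
  obtain ⟨j, hj, hx⟩ := mem_Iv.1 hxu
  obtain ⟨j', hj', hx'⟩ := mem_Iv.1 hxv
  have hc : cdist a u v ≤ f u + f v :=
    cdist_le_core (by have := hf u; omega) (by have := hf v; omega) hj hj'
      (hx.symm.trans hx')
  have := K u v hne hu hv
  omega

lemma count_le (ha : 2 ≤ a) {f : Fin (2*a+1) → ℕ} (hf : ∀ u, f u ≤ (a+1)/2)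
    (K : ∀ u v : Fin (2*a+1), u ≠ v → 0 < f u → 0 < f v →
      2 * max (f u) (f v) + 1 ≤ cdist a u v) :
    ((Finset.univ.filter (fun u => 0 < f u)).biUnion (Iv a f)).card
      = 2 * (∑ v ∈ Finset.univ.filter (fun u => 0 < f u), f v)
        + (Finset.univ.filter (fun u => 0 < f u)).card ∧
    2 * (∑ v ∈ Finset.univ.filter (fun u => 0 < f u), f v)
      + (Finset.univ.filter (fun u => 0 < f u)).card ≤ 2*a+1 := by
  set S := Finset.univ.filter (fun u => 0 < f u) with hS
  have hmem : ∀ u ∈ S, 0 < f u := fun u hu => (Finset.mem_filter.1 hu).2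
  have hcard : (S.biUnion (Iv a f)).card = ∑ u ∈ S, (2 * f u + 1) := by
    rw [Finset.card_biUnion (fun u hu v hv hne => disj_Iv ha hf K (hmem u hu) (hmem v hv) hne)]
    exact Finset.sum_congr rfl (fun u _ => card_Iv f u (by have := hf u; omega))
  have hsum : ∑ u ∈ S, (2 * f u + 1) = 2 * (∑ u ∈ S, f u) + S.card := by
    rw [Finset.sum_add_distrib, Finset.sum_const, ← Finset.mul_sum]
    simp [Nat.smul_one_eq_cast]
  constructor
  · rw [hcard, hsum]
  · rw [← hsum, ← hcard]
    have h1 := Finset.card_le_univ (S.biUnion (Iv a f))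
    simpa using h1

lemma upper1 (ha : 2 ≤ a) {f : Fin (2*a+1) → ℕ}
    (hb : IsIndepBroadcast (circulantGraph (2*a+1) a) f) :
    ∑ v, f v ≤ a - 1 := by
  obtain ⟨hf, K⟩ := broadcast_facts ha hb
  rw [sum_eq_filter f]
  set S := Finset.univ.filter (fun u => 0 < f u) with hS
  have hmem : ∀ u ∈ S, 0 < f u := fun u hu => (Finset.mem_filter.1 hu).2
  have hle := (count_le ha hf K).2
  rw [← hS] at hle
  rcases Nat.lt_or_ge S.card 3 with h3 | h3
  · interval_cases h : S.card
    · rw [Finset.card_eq_zero.1 h, Finset.sum_empty]; omega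
    · obtain ⟨u, hu⟩ := Finset.card_eq_one.1 h
      rw [hu, Finset.sum_singleton]
      have := hf u; omega
    · obtain ⟨u, v, hne, huv⟩ := Finset.card_eq_two.1 h
      rw [huv, Finset.sum_insert (by simp [hne]), Finset.sum_singleton]
      have hu : u ∈ S := huv ▸ Finset.mem_insert_self u {v}
      have hv : v ∈ S := huv ▸ Finset.mem_insert_of_mem (Finset.mem_singleton_self v)
      have hK := K u v hne (hmem u hu) (hmem v hv)
      have := cdist_le u v
      omega
  · omega

variable {a : ℕ}
open Finset

lemma partner (ha : 2 ≤ a) {f : Fin (2*a+1) → ℕ} (hf : ∀ u, f u ≤ (a+1)/2)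
    (K : ∀ u v : Fin (2*a+1), u ≠ v → 0 < f u → 0 < f v →
      2 * max (f u) (f v) + 1 ≤ cdist a u v)
    (hcov : (Finset.univ.filter (fun u => 0 < f u)).biUnion (Iv a f) = Finset.univ)
    {u : Fin (2*a+1)} (hu : u ∈ Finset.univ.filter (fun u => 0 < f u)) :
    ∃ v ∈ Finset.univ.filter (fun u => 0 < f u), v ≠ u ∧ f v = f u := by
  have hu' : 0 < f u := (Finset.mem_filter.1 hu).2
  have hfu := hf u
  set x : Fin (2*a+1) :=
    ⟨(2*u.val + (2*a+1 - f u) + (2*f u+1)) % (2*a+1), Nat.mod_lt _ (by omega)⟩ with hxdef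
  have hx : x ∈ (Finset.univ.filter (fun u => 0 < f u)).biUnion (Iv a f) := by
    rw [hcov]; exact Finset.mem_univ x
  obtain ⟨v, hv, hxv⟩ := Finset.mem_biUnion.1 hx
  obtain ⟨j', hj', hx'⟩ := mem_Iv.1 hxv
  have hfv := hf v
  have hvne : v ≠ u := by
    rintro rfl
    have h1 : (2*v.val + (2*a+1 - f v) + j') % (2*a+1)
        = (2*v.val + (2*a+1 - f v) + (2*f v+1)) % (2*a+1) := hx'.symm
    have h2 : j' ≡ 2*f v + 1 [MOD 2*a+1] := Nat.ModEq.add_left_cancel' _ h1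
    unfold Nat.ModEq at h2
    rw [Nat.mod_eq_of_lt (by omega), Nat.mod_eq_of_lt (by omega)] at h2
    omega
  refine ⟨v, hv, hvne, ?_⟩
  · have harg : 2*u.val + (2*a+1 - (f u + 1)) + 2*(f u + 1)
        = 2*u.val + (2*a+1 - f u) + (2*f u+1) := by omega
    have hcd : cdist a u v ≤ (f u + 1) + f v := by
      refine cdist_le_core (p := f u + 1) (q := f v) (by omega) (by omega)
        (le_refl _) hj' ?_
      rw [harg]
      exact hx'
    have hK := K u v (fun h => hvne h.symm) hu' (Finset.mem_filter.1 hv).2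
    omega

lemma upper2 (ha4 : 4 ≤ a) (hev : a % 2 = 0) (h6 : a % 6 ≠ 4) {f : Fin (2*a+1) → ℕ}
    (hb : IsIndepBroadcast (circulantGraph (2*a+1) a) f) :
    ∑ v, f v ≤ a - 2 := by
  have ha : 2 ≤ a := by omega
  obtain ⟨hf, K⟩ := broadcast_facts ha hb
  rw [sum_eq_filter f]
  set S := Finset.univ.filter (fun u => 0 < f u) with hS
  have hmem : ∀ u ∈ S, 0 < f u := fun u hu => (Finset.mem_filter.1 hu).2
  obtain ⟨hceq, hle⟩ := count_le ha hf K
  rw [← hS] at hle hceq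
  rcases Nat.lt_or_ge S.card 3 with h3 | h3
  · interval_cases h : S.card
    · rw [Finset.card_eq_zero.1 h, Finset.sum_empty]; omega
    · obtain ⟨u, hu⟩ := Finset.card_eq_one.1 h
      rw [hu, Finset.sum_singleton]
      have := hf u; omega
    · obtain ⟨u, v, hne, huv⟩ := Finset.card_eq_two.1 h
      rw [huv, Finset.sum_insert (by simp [hne]), Finset.sum_singleton]
      have hu : u ∈ S := huv ▸ Finset.mem_insert_self u {v}
      have hv : v ∈ S := huv ▸ Finset.mem_insert_of_mem (Finset.mem_singleton_self v)
      have hK := K u v hne (hmem u hu) (hmem v hv)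
      have := cdist_le u v
      omega
  rcases Nat.lt_or_ge 3 S.card with h4 | h4
  · omega
  have h33 : S.card = 3 := by omega
  by_contra hcon
  have hsum3 : ∑ v ∈ S, f v = a - 1 := by omega
  have hcov : S.biUnion (Iv a f) = Finset.univ := by
    apply Finset.eq_univ_of_card
    rw [hceq, hsum3, h33]
    simp only [Fintype.card_fin]
    omega
  obtain ⟨x, y, z, hxy, hxz, hyz, hS3⟩ := Finset.card_eq_three.1 h33
  have hxS : x ∈ S := by rw [hS3]; simp
  have hyS : y ∈ S := by rw [hS3]; simp
  have hzS : z ∈ S := by rw [hS3]; simp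
  obtain ⟨px, hpxS, hpxne, hpxf⟩ := partner ha hf K hcov hxS
  obtain ⟨py, hpyS, hpyne, hpyf⟩ := partner ha hf K hcov hyS
  obtain ⟨pz, hpzS, hpzne, hpzf⟩ := partner ha hf K hcov hzS
  rw [← hS, hS3] at hpxS hpyS hpzS
  simp only [Finset.mem_insert, Finset.mem_singleton] at hpxS hpyS hpzS
  have hsum' : ∑ v ∈ S, f v = f x + f y + f z := by
    rw [hS3, Finset.sum_insert (by simp [hxy, hxz]),
      Finset.sum_insert (by simp [hyz]), Finset.sum_singleton]
    ring
  rcases hpxS with rfl | rfl | rfl <;> rcases hpyS with rfl | rfl | rfl <;>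
    rcases hpzS with rfl | rfl | rfl <;>
    first
      | exact absurd rfl hpxne
      | exact absurd rfl hpyne
      | exact absurd rfl hpzne
      | omega

variable {a : ℕ}
open Finset

lemma cdist_self (u : Fin (2*a+1)) : cdist a u u = 0 := by
  unfold cdist; rw [dd_self]; omega

lemma mem_set_single (ha : 2 ≤ a) :
    ∃ f : Fin (2*a+1) → ℕ, IsIndepBroadcast (circulantGraph (2*a+1) a) f ∧
      ∑ v, f v = (a+1)/2 := by
  set u0 : Fin (2*a+1) := ⟨0, by omega⟩ with hu0
  refine ⟨fun x => if x = u0 then (a+1)/2 else 0, ⟨?_, ?_⟩, ?_⟩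
  · intro v; rw [eccent_eq ha]; dsimp only; split <;> omega
  · intro u v hne hu hv
    dsimp only at hu hv ⊢
    have h1 : u = u0 := by by_contra h; simp [h] at hu
    have h2 : v = u0 := by by_contra h; simp [h] at hv
    exact absurd (h1.trans h2.symm) hne
  · simp [Finset.sum_ite_eq']

lemma mem_set_two (ha : 2 ≤ a) :
    ∃ f : Fin (2*a+1) → ℕ, IsIndepBroadcast (circulantGraph (2*a+1) a) f ∧
      ∑ v, f v = 2*((a+1)/2 - 1) := by
  set u0 : Fin (2*a+1) := ⟨0, by omega⟩ with hu0
  obtain ⟨v0, hv0⟩ := exists_far ha u0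
  have hne : u0 ≠ v0 := by
    intro h; rw [h, cdist_self] at hv0; omega
  set c := (a+1)/2 - 1 with hc
  refine ⟨fun x => (if x = u0 then c else 0) + (if x = v0 then c else 0), ⟨?_, ?_⟩, ?_⟩
  · intro v; rw [eccent_eq ha]; dsimp only; split <;> split <;> omega
  · intro u v hne' hu hv
    dsimp only at hu hv ⊢
    have h1 : u = u0 ∨ u = v0 := by
      by_contra h; push_neg at h; simp [h.1, h.2] at hu
    have h2 : v = u0 ∨ v = v0 := by
      by_contra h; push_neg at h; simp [h.1, h.2] at hv
    have hcd : cdist a u v = a := by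
      rcases h1 with rfl | rfl <;> rcases h2 with rfl | rfl
      · exact absurd rfl hne'
      · exact hv0
      · rw [cdist_comm]; exact hv0
      · exact absurd rfl hne'
    rw [lt_dist_iff ha, hcd]
    have e1 : (if u = u0 then c else 0) + (if u = v0 then c else 0) ≤ c := by
      rcases h1 with rfl | rfl <;> simp [hne, hne.symm] <;> split <;> omega
    have e2 : (if v = u0 then c else 0) + (if v = v0 then c else 0) ≤ c := by
      rcases h2 with rfl | rfl <;> simp [hne, hne.symm] <;> split <;> omega
    omega
  · rw [Finset.sum_add_distrib]
    simp [Finset.sum_ite_eq']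
    omega

lemma mem_set_three (h6 : a % 6 = 4) :
    ∃ f : Fin (2*a+1) → ℕ, IsIndepBroadcast (circulantGraph (2*a+1) a) f ∧
      ∑ v, f v = a - 1 := by
  have ha : 2 ≤ a := by omega
  obtain ⟨s, rfl⟩ : ∃ s, a = 6*s+4 := ⟨(a-4)/6, by omega⟩
  set p : Fin (2*(6*s+4)+1) := ⟨0, by omega⟩ with hp
  set q : Fin (2*(6*s+4)+1) := ⟨8*s+6, by omega⟩ with hq
  set r : Fin (2*(6*s+4)+1) := ⟨4*s+3, by omega⟩ with hr
  have hpq : p ≠ q := Fin.ne_of_val_ne (by simp [hp, hq])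
  have hpr : p ≠ r := Fin.ne_of_val_ne (by simp [hp, hr])
  have hqr : q ≠ r := Fin.ne_of_val_ne (by simp [hq, hr]; omega)
  have ddpq : dd (6*s+4) p q = 4*s+3 := by
    unfold dd; exact mod_eq_of' (by omega) ⟨3, by simp [hp, hq]; omega⟩
  have ddqr : dd (6*s+4) q r = 4*s+3 := by
    unfold dd; exact mod_eq_of' (by omega) ⟨1, by simp [hq, hr]; omega⟩
  have ddpr : dd (6*s+4) p r = 8*s+6 := by
    unfold dd; exact mod_eq_of' (by omega) ⟨2, by simp [hp, hr]; omega⟩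
  have cpq : cdist (6*s+4) p q = 4*s+3 := by unfold cdist; rw [ddpq]; omega
  have cqr : cdist (6*s+4) q r = 4*s+3 := by unfold cdist; rw [ddqr]; omega
  have cpr : cdist (6*s+4) p r = 4*s+3 := by unfold cdist; rw [ddpr]; omega
  refine ⟨fun x => (if x = p then 2*s+1 else 0) + (if x = q then 2*s+1 else 0)
    + (if x = r then 2*s+1 else 0), ⟨?_, ?_⟩, ?_⟩
  · intro v; rw [eccent_eq ha]; dsimp only; split <;> split <;> split <;> omega
  · intro u v hne' hu hv
    dsimp only at hu hv ⊢
    have h1 : u = p ∨ u = q ∨ u = r := by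
      by_contra h; push_neg at h; simp [h.1, h.2.1, h.2.2] at hu
    have h2 : v = p ∨ v = q ∨ v = r := by
      by_contra h; push_neg at h; simp [h.1, h.2.1, h.2.2] at hv
    have hcd : cdist (6*s+4) u v = 4*s+3 := by
      rcases h1 with rfl | rfl | rfl <;> rcases h2 with rfl | rfl | rfl <;>
        first
          | exact absurd rfl hne'
          | assumption
          | (rw [cdist_comm]; assumption)
    rw [lt_dist_iff ha, hcd]
    have e1 : (if u = p then 2*s+1 else 0) + (if u = q then 2*s+1 else 0)
        + (if u = r then 2*s+1 else 0) ≤ 2*s+1 := by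
      rcases h1 with rfl | rfl | rfl <;>
        simp [hpq, hpr, hqr, hpq.symm, hpr.symm, hqr.symm]
    have e2 : (if v = p then 2*s+1 else 0) + (if v = q then 2*s+1 else 0)
        + (if v = r then 2*s+1 else 0) ≤ 2*s+1 := by
      rcases h2 with rfl | rfl | rfl <;>
        simp [hpq, hpr, hqr, hpq.symm, hpr.symm, hqr.symm]
    omega
  · rw [Finset.sum_add_distrib, Finset.sum_add_distrib]
    simp [Finset.sum_ite_eq']
    omega

lemma bdd (ha : 2 ≤ a) :
    BddAbove {k | ∃ f : Fin (2*a+1) → ℕ,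
      IsIndepBroadcast (circulantGraph (2*a+1) a) f ∧ ∑ v, f v = k} :=
  ⟨a - 1, by rintro k ⟨f, hf, rfl⟩; exact upper1 ha hf⟩

lemma nonemptyS (ha : 2 ≤ a) :
    Set.Nonempty {k | ∃ f : Fin (2*a+1) → ℕ,
      IsIndepBroadcast (circulantGraph (2*a+1) a) f ∧ ∑ v, f v = k} :=
  ⟨0, fun _ => 0, ⟨fun _ => Nat.zero_le _, fun u v _ h _ => absurd h (by simp)⟩, by simp⟩

end S15

theorem stmt15 (a : ℕ) (ha : 2 ≤ a) :
    (a = 2 ∨ a % 6 = 4 → betaB (circulantGraph (2 * a + 1) a) = a - 1) ∧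
    (¬(a = 2 ∨ a % 6 = 4) →
      betaB (circulantGraph (2 * a + 1) a) = 2 * ((a + 1) / 2 - 1)) := by
  constructor
  · intro hbr
    apply le_antisymm
    · apply csSup_le (S15.nonemptyS ha)
      rintro k ⟨f, hf, rfl⟩
      exact S15.upper1 ha hf
    · apply le_csSup (S15.bdd ha)
      rcases hbr with rfl | h6
      · obtain ⟨f, hf, hs⟩ := S15.mem_set_single (le_refl 2)
        exact ⟨f, hf, hs⟩
      · obtain ⟨f, hf, hs⟩ := S15.mem_set_three h6
        exact ⟨f, hf, hs⟩
  · intro hbr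
    push_neg at hbr
    obtain ⟨ha2, h6⟩ := hbr
    apply le_antisymm
    · apply csSup_le (S15.nonemptyS ha)
      rintro k ⟨f, hf, rfl⟩
      rcases Nat.even_or_odd a with he | ho
      · have h4 : 4 ≤ a := by rcases he with ⟨b, rfl⟩; omega
        have := S15.upper2 h4 (by rcases he with ⟨b, rfl⟩; omega) h6 hf
        rcases he with ⟨b, rfl⟩
        omega
      · have := S15.upper1 ha hf
        rcases ho with ⟨b, rfl⟩
        omega
    · apply le_csSup (S15.bdd ha)
      obtain ⟨f, hf, hs⟩ := S15.mem_set_two ha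
      exact ⟨f, hf, hs⟩
end

section
/- If n and a are integers with n even, n ≥ 6, a odd, and 3 ≤ a ≤ ⌊n/2⌋, then β_b(C(n;1,a)) = α(C(n;1,a)) = n/2. -/
open Finset
open Fin.NatCast Fin.IntCast Fin.CommRing

namespace SimpleGraph

section AddGroup

variable {G : Type*} [AddGroup G] {Γ : SimpleGraph G} {c : G}

lemma edist_add_nsmul_le (hc : ∀ y, Γ.Adj y (y + c)) (y : G) (k : ℕ) :
    Γ.edist y (y + k • c) ≤ k := by
  induction k with
  | zero => simp
  | succ k ih =>
    calc Γ.edist y (y + (k + 1) • c)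
        ≤ Γ.edist y (y + k • c) + Γ.edist (y + k • c) (y + k • c + c) := by
          rw [succ_nsmul, ← add_assoc]; exact Γ.edist_triangle
      _ ≤ k + 1 := add_le_add ih (edist_eq_one_iff_adj.mpr (hc _)).le
      _ = (k + 1 : ℕ) := by push_cast; rfl

lemma edist_add_zsmul_le (hc : ∀ y, Γ.Adj y (y + c)) (y : G) (m : ℤ) :
    Γ.edist y (y + m • c) ≤ m.natAbs := by
  obtain ⟨k, rfl | rfl⟩ := Int.eq_nat_or_neg m
  · simpa using edist_add_nsmul_le hc y k
  · rw [edist_comm]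
    simpa using edist_add_nsmul_le hc (y + -(k : ℤ) • c) k

end AddGroup

lemma dist_le_of_edist_le {V : Type*} {Γ : SimpleGraph V} {u v : V} {k : ℕ}
    (h : Γ.edist u v ≤ k) : Γ.dist u v ≤ k := by
  have hr : Γ.Reachable u v := reachable_of_edist_ne_top (ne_top_of_le_ne_top (by simp) h)
  exact_mod_cast hr.coe_dist_eq_edist ▸ h

end SimpleGraph

lemma isIndepBroadcast_indicator {V : Type*} [Fintype V] [DecidableEq V] [Nontrivial V]
    {G : SimpleGraph V} (hG : G.Connected) {s : Finset V}
    (hs : ∀ u ∈ s, ∀ v ∈ s, ¬ G.Adj u v) :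
    IsIndepBroadcast G (fun v => if v ∈ s then 1 else 0) := by
  refine ⟨fun v => ?_, fun u v huv hu hv => ?_⟩
  · obtain ⟨w, hw⟩ := exists_ne v
    calc (if v ∈ s then 1 else 0) ≤ G.dist v w := by
          split_ifs
          exacts [hG.pos_dist_of_ne hw.symm, Nat.zero_le _]
      _ ≤ eccent G v := le_sup (f := fun w => G.dist v w) (mem_univ w)
  · obtain ⟨hu, hv⟩ : u ∈ s ∧ v ∈ s :=
      ⟨by_contra fun h => by simp [h] at hu, by_contra fun h => by simp [h] at hv⟩
    simpa [hu, hv] using hG.one_lt_dist_of_ne_of_not_adj huv (hs u hu v hv)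

lemma mul_sum_le_card_of_disjoint {V : Type*} [Fintype V] [DecidableEq V] {f : V → ℕ} {c : ℕ}
    (T : V → Finset V) (hT : ∀ v, 0 < f v → c * f v ≤ #(T v))
    (hdisj : ∀ u v, u ≠ v → 0 < f u → 0 < f v → Disjoint (T u) (T v)) :
    c * ∑ v, f v ≤ Fintype.card V := by
  set S := univ.filter (0 < f ·)
  calc c * ∑ v, f v = ∑ v ∈ S, c * f v := by
        rw [mul_sum, sum_filter_of_ne fun v _ hv => Nat.pos_of_ne_zero (right_ne_zero_of_mul hv)]
    _ ≤ ∑ v ∈ S, #(T v) := sum_le_sum fun v hv => hT v (mem_filter.mp hv).2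
    _ = #(S.biUnion T) := (card_biUnion fun u hu v hv huv =>
        hdisj u v huv (mem_filter.mp hu).2 (mem_filter.mp hv).2).symm
    _ ≤ Fintype.card V := card_le_univ _

lemma Fin.intCast_injOn {n : ℕ} [NeZero n] {s : Finset ℤ}
    (hs : ∀ δ₁ ∈ s, ∀ δ₂ ∈ s, (δ₁ - δ₂).natAbs < n) :
    Set.InjOn (fun δ : ℤ => (δ : Fin n)) s := by
  intro δ₁ h₁ δ₂ h₂ heq
  have hdvd : (n : ℤ) ∣ δ₁ - δ₂ := ((CharP.intCast_eq_intCast (Fin n) n).mp heq).symm.dvd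
  exact sub_eq_zero.mp
    (Int.eq_zero_of_dvd_of_natAbs_lt_natAbs hdvd (by simpa using hs δ₁ h₁ δ₂ h₂))

lemma exists_eq_add_mul_of_natAbs_le {h c : ℕ} {δ : ℤ}
    (hδ : δ.natAbs ≤ c * (2 * h + 1) + h) :
    ∃ s q : ℤ, δ = s + q * (2 * h + 1) ∧ s.natAbs ≤ h ∧ q.natAbs ≤ c := by
  have hδ' : |δ| ≤ c * (2 * h + 1) + h := by rw [Int.abs_eq_natAbs]; exact_mod_cast hδ
  set a : ℤ := 2 * h + 1
  have ha : 0 < a := by omega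
  obtain ⟨hδ₀, hδ₁⟩ := abs_le.mp hδ'
  have hdiv := Int.mul_ediv_add_emod (δ + h) a
  have hr₀ := Int.emod_nonneg (δ + h) ha.ne'
  have hr₁ := Int.emod_lt_of_pos (δ + h) ha
  refine ⟨(δ + h) % a - h, (δ + h) / a, by linarith, by omega, ?_⟩
  have hq₁ : (δ + h) / a ≤ c := by
    by_contra! hq
    nlinarith [mul_le_mul_of_nonneg_left (Int.add_one_le_of_lt hq) ha.le]
  have hq₀ : -c ≤ (δ + h) / a := by
    by_contra! hq
    nlinarith [mul_le_mul_of_nonneg_left (Int.add_one_le_of_lt hq) ha.le]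
  omega

lemma le_half_sub_mul_add {h f : ℕ} (hh : 1 ≤ h) (hf : 2 * h + 1 < f)
    (hexc : ¬(h = 1 ∧ f = 5)) :
    f ≤ (f / 2 - h) * (2 * h + 1) + h := by
  obtain ⟨u, hu⟩ : ∃ u, f / 2 = h + 1 + u := ⟨f / 2 - (h + 1), by omega⟩
  have hf2 : f ≤ 2 * (f / 2) + 1 := by omega
  rw [hu, show h + 1 + u - h = u + 1 by omega]
  rcases Nat.eq_or_lt_of_le hh with rfl | hh
  · omega
  · nlinarith [Nat.mul_le_mul_left u hh]

/-- For `f ≤ a`: the `⌊f/2⌋`-ball along the cycle and a window of radius `⌊(f-1)/2⌋` around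
the chord `a`. For `f > a` the whole interval `[-f, f-1]` is within distance `⌊f/2⌋` (write
`δ = s + q a`), except when `a = 3, f = 5`, where `-5` is not and `6` replaces it. -/
noncomputable def tokenOffsets (a f : ℕ) : Finset ℤ :=
  if f ≤ a then Icc (-(f / 2 : ℤ)) (f / 2) ∪ Icc (a - (f - 1) / 2) (a + (f - 1) / 2)
  else if a = 3 ∧ f = 5 then Icc (-4) 4 ∪ {6}
  else Icc (-(f : ℤ)) (f - 1)

lemma card_tokenOffsets {a f : ℕ} (hf : 0 < f) : #(tokenOffsets a f) = 2 * f := by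
  unfold tokenOffsets
  split_ifs with h₁ h₂
  · rw [card_union_of_disjoint (disjoint_left.mpr fun x hx hx' => by
      simp only [mem_Icc] at hx hx'; omega), Int.card_Icc, Int.card_Icc]
    omega
  · rw [card_union_of_disjoint (by simp), Int.card_Icc, card_singleton, h₂.2]
    rfl
  · rw [Int.card_Icc]
    omega

lemma natAbs_sub_lt_of_mem_tokenOffsets {n a f : ℕ} (hf₀ : 0 < f) (hf : f ≤ n / 2)
    (ha : a ≤ n / 2) (hexc : a = 3 → f = 5 → 11 ≤ n) {δ₁ δ₂ : ℤ}
    (h₁ : δ₁ ∈ tokenOffsets a f) (h₂ : δ₂ ∈ tokenOffsets a f) :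
    (δ₁ - δ₂).natAbs < n := by
  unfold tokenOffsets at h₁ h₂
  split_ifs at h₁ h₂ with hc₁ hc₂
  · simp only [mem_union, mem_Icc] at h₁ h₂
    omega
  · have := hexc hc₂.1 hc₂.2
    simp only [mem_union, mem_Icc, mem_singleton] at h₁ h₂
    omega
  · simp only [mem_Icc] at h₁ h₂
    omega

lemma exists_decomp_of_mem_tokenOffsets {a f : ℕ} (hao : Odd a) (ha : 3 ≤ a) {δ : ℤ}
    (hδ : δ ∈ tokenOffsets a f) :
    (∃ s q : ℤ, δ = s + q * a ∧ s.natAbs + q.natAbs ≤ f / 2) ∨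
      (∃ s : ℤ, δ = a + s ∧ s.natAbs ≤ (f - 1) / 2) := by
  obtain ⟨h, rfl⟩ := hao
  unfold tokenOffsets at hδ
  split_ifs at hδ with hc₁ hc₂
  · simp only [mem_union, mem_Icc] at hδ
    rcases hδ with hδ | hδ
    · exact .inl ⟨δ, 0, by ring, by omega⟩
    · exact .inr ⟨δ - (2 * h + 1 : ℕ), by ring, by omega⟩
  · obtain ⟨rfl, rfl⟩ : h = 1 ∧ f = 5 := by omega
    simp only [mem_union, mem_Icc, mem_singleton] at hδ
    refine .inl ?_
    rcases hδ with hδ | rfl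
    · obtain ⟨s, q, rfl, hs, hq⟩ :=
        exists_eq_add_mul_of_natAbs_le (h := 1) (c := 1) (δ := δ) (by omega)
      exact ⟨s, q, by push_cast; ring, by omega⟩
    · exact ⟨0, 2, by norm_num, by norm_num⟩
  · simp only [mem_Icc] at hδ
    have hfh : f ≤ (f / 2 - h) * (2 * h + 1) + h :=
      le_half_sub_mul_add (by omega) (by omega) (by omega)
    obtain ⟨s, q, rfl, hs, hq⟩ :=
      exists_eq_add_mul_of_natAbs_le (h := h) (c := f / 2 - h) (δ := δ) (by omega)
    exact .inl ⟨s, q, by push_cast; ring, by omega⟩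

namespace circulantGraph

variable {n a : ℕ}

lemma mod_two_ne_of_adj (hne : Even n) (hao : Odd a) {x y : Fin n}
    (h : (circulantGraph n a).Adj x y) : x.val % 2 ≠ y.val % 2 := by
  have h2 : 2 ∣ n := hne.two_dvd
  have hodd := Nat.odd_iff.mp hao
  have key : ∀ u v : Fin n, ((u.val + 1) % n = v.val ∨ (u.val + a) % n = v.val) →
      u.val % 2 ≠ v.val % 2 := by
    rintro u v (hr | hr)
    · have := Nat.mod_mod_of_dvd (u.val + 1) h2; omega
    · have := Nat.mod_mod_of_dvd (u.val + a) h2; omega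
  rcases ((SimpleGraph.fromRel_adj _ _ _).mp h).2 with hr | hr
  · exact key x y hr
  · exact (key y x hr).symm

lemma exists_indep_card_eq_half (hne : Even n) (hao : Odd a) :
    ∃ s : Finset (Fin n),
      (∀ u ∈ s, ∀ v ∈ s, ¬ (circulantGraph n a).Adj u v) ∧ #s = n / 2 := by
  refine ⟨univ.image fun i : Fin (n / 2) => ⟨2 * i, by omega⟩, ?_, ?_⟩
  · simp only [mem_image, mem_univ, true_and]
    rintro _ ⟨i, rfl⟩ _ ⟨j, rfl⟩ hadj
    have := mod_two_ne_of_adj hne hao hadj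
    simp at this
  · rw [card_image_of_injective _ fun i j hij => Fin.ext (by simpa using congrArg Fin.val hij)]
    simp

variable [NeZero n]

lemma adj_add_one (hn : 2 ≤ n) (x : Fin n) : (circulantGraph n a).Adj x (x + 1) := by
  have hone : (1 : Fin n).val = 1 := by rw [Fin.val_one', Nat.one_mod_eq_one.mpr (by omega)]
  refine (SimpleGraph.fromRel_adj _ _ _).mpr
    ⟨fun h => ?_, .inl (.inl (by rw [Fin.val_add, hone]))⟩
  have := congrArg Fin.val (left_eq_add.mp h)
  simp only [hone, Fin.val_zero] at this
  omega

lemma adj_add_natCast (ha : 0 < a) (han : a < n) (x : Fin n) :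
    (circulantGraph n a).Adj x (x + a) := by
  have hval : (a : Fin n).val = a := by rw [Fin.val_natCast, Nat.mod_eq_of_lt han]
  refine (SimpleGraph.fromRel_adj _ _ _).mpr
    ⟨fun h => ?_, .inl (.inr (by rw [Fin.val_add, hval]))⟩
  have := congrArg Fin.val (left_eq_add.mp h)
  simp only [hval, Fin.val_zero] at this
  omega

lemma edist_add_le (hn : 2 ≤ n) (ha : 0 < a) (han : a < n) (x : Fin n) (s q : ℤ) :
    (circulantGraph n a).edist x (x + ((s + q * a : ℤ) : Fin n)) ≤ s.natAbs + q.natAbs := by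
  have hcast : x + ((s + q * a : ℤ) : Fin n) = x + s • (1 : Fin n) + q • (a : Fin n) := by
    simp only [zsmul_eq_mul, mul_one]; push_cast; ring
  rw [hcast]
  calc _ ≤ (circulantGraph n a).edist x (x + s • (1 : Fin n)) + (circulantGraph n a).edist
        (x + s • (1 : Fin n)) (x + s • (1 : Fin n) + q • (a : Fin n)) :=
        SimpleGraph.edist_triangle
    _ ≤ s.natAbs + q.natAbs :=
        add_le_add (SimpleGraph.edist_add_zsmul_le (adj_add_one hn) _ _)
          (SimpleGraph.edist_add_zsmul_le (adj_add_natCast ha han) _ _)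
    _ = (s.natAbs + q.natAbs : ℕ) := by push_cast; rfl

lemma dist_add_le (hn : 2 ≤ n) (ha : 0 < a) (han : a < n) (x : Fin n) (s q : ℤ) :
    (circulantGraph n a).dist x (x + ((s + q * a : ℤ) : Fin n)) ≤ s.natAbs + q.natAbs :=
  SimpleGraph.dist_le_of_edist_le (edist_add_le hn ha han x s q)

lemma dist_add_intCast_le (hn : 2 ≤ n) (ha : 0 < a) (han : a < n) (x : Fin n) (s : ℤ) :
    (circulantGraph n a).dist x (x + (s : Fin n)) ≤ s.natAbs := by
  simpa using dist_add_le hn ha han x s 0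

lemma connected (hn : 2 ≤ n) : (circulantGraph n a).Connected := by
  refine ⟨fun x y => ?_⟩
  have h := SimpleGraph.edist_add_nsmul_le (adj_add_one (a := a) hn) x (y - x).val
  rw [nsmul_one, Fin.cast_val_eq_self, add_sub_cancel] at h
  exact SimpleGraph.reachable_of_edist_ne_top (ne_top_of_le_ne_top (by simp) h)

lemma exists_intCast_eq_natAbs_le (w : Fin n) :
    ∃ δ : ℤ, (δ : Fin n) = w ∧ δ.natAbs ≤ n / 2 := by
  rcases le_or_gt w.val (n / 2) with h | h
  · exact ⟨w.val, by simp, by omega⟩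
  · exact ⟨(w.val : ℤ) - n, by simp, by omega⟩

lemma eccent_le {x : Fin n} {r : ℕ}
    (h : ∀ δ : ℤ, δ.natAbs ≤ n / 2 → (circulantGraph n a).dist x (x + δ) ≤ r) :
    eccent (circulantGraph n a) x ≤ r := by
  refine Finset.sup_le fun y _ => ?_
  obtain ⟨δ, hδ, hδn⟩ := exists_intCast_eq_natAbs_le (y - x)
  simpa [hδ] using h δ hδn

lemma eccent_le_half (hn : 2 ≤ n) (ha : 0 < a) (han : a < n) (x : Fin n) :
    eccent (circulantGraph n a) x ≤ n / 2 :=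
  eccent_le fun δ hδ => (dist_add_intCast_le hn ha han x δ).trans hδ

lemma eccent_le_of_half_le {h c : ℕ} (hah : a = 2 * h + 1) (hn : 2 ≤ n) (han : a < n)
    (hnc : n / 2 ≤ c * a + h) (x : Fin n) : eccent (circulantGraph n a) x ≤ h + c := by
  refine eccent_le fun δ hδ => ?_
  obtain ⟨s, q, rfl, hs, hq⟩ := exists_eq_add_mul_of_natAbs_le (h := h) (c := c) (δ := δ)
    (by rw [← hah]; omega)
  have := dist_add_le hn (by omega) han x s q
  push_cast [hah] at this ⊢
  omega

lemma dist_le_max_of_add_eq (hao : Odd a) (ha : 3 ≤ a) (han : a < n) {u v : Fin n}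
    {k l : ℕ} (hk : 0 < k) (hl : 0 < l) {δ₁ δ₂ : ℤ} (h₁ : δ₁ ∈ tokenOffsets a k)
    (h₂ : δ₂ ∈ tokenOffsets a l) (heq : u + (δ₁ : Fin n) = v + (δ₂ : Fin n)) :
    (circulantGraph n a).dist u v ≤ max k l := by
  have hn : 2 ≤ n := by omega
  have hdist_chord (w : Fin n) (s : ℤ) :
      (circulantGraph n a).dist w (w + ((a + s : ℤ) : Fin n)) ≤ s.natAbs + 1 := by
    simpa [add_comm] using dist_add_le hn (by omega) han w s 1
  have htri : (circulantGraph n a).dist u v ≤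
      (circulantGraph n a).dist u (u + δ₁) + (circulantGraph n a).dist v (v + δ₂) :=
    calc _ ≤ _ := (connected hn).dist_triangle
      _ = _ := by rw [SimpleGraph.dist_comm (u := u + _), heq]
  rcases exists_decomp_of_mem_tokenOffsets hao ha h₁ with
    ⟨s₁, q₁, rfl, hb₁⟩ | ⟨s₁, rfl, hb₁⟩ <;>
  rcases exists_decomp_of_mem_tokenOffsets hao ha h₂ with
    ⟨s₂, q₂, rfl, hb₂⟩ | ⟨s₂, rfl, hb₂⟩
  · have := dist_add_le hn (by omega) han u s₁ q₁
    have := dist_add_le hn (by omega) han v s₂ q₂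
    omega
  · have := dist_add_le hn (by omega) han u s₁ q₁
    have := hdist_chord v s₂
    omega
  · have := hdist_chord u s₁
    have := dist_add_le hn (by omega) han v s₂ q₂
    omega
  · have hv : v = u + ((s₁ - s₂ : ℤ) : Fin n) := by
      refine add_right_cancel (b := ((a + s₂ : ℤ) : Fin n)) ?_
      rw [← heq]; push_cast; ring
    have := dist_add_intCast_le hn (by omega) han u (s₁ - s₂)
    rw [← hv] at this
    omega

lemma two_mul_sum_le_of_isIndepBroadcast (hao : Odd a) (ha : 3 ≤ a) (han : a ≤ n / 2)
    {f : Fin n → ℕ} (hf : IsIndepBroadcast (circulantGraph n a) f) : 2 * ∑ v, f v ≤ n := by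
  have hn : 2 ≤ n := by omega
  have han' : a < n := by omega
  obtain ⟨hecc, hindep⟩ := hf
  have hfn (u : Fin n) : f u ≤ n / 2 := (hecc u).trans (eccent_le_half hn (by omega) han' u)
  -- For `n ≤ 10` the eccentricities in `C(n;1,3)` are at most `3`.
  have hexc (u : Fin n) (ha₃ : a = 3) (hf₅ : f u = 5) : 11 ≤ n := by
    by_contra! hn₁₀
    have := eccent_le_of_half_le (h := 1) (c := 2) ha₃ hn han' (by omega) u
    have := hecc u
    omega
  have hinj (u : Fin n) (hu : 0 < f u) :
      Set.InjOn (fun δ : ℤ => u + (δ : Fin n)) (tokenOffsets a (f u)) :=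
    (add_right_injective u).comp_injOn (Fin.intCast_injOn fun δ₁ h₁ δ₂ h₂ =>
      natAbs_sub_lt_of_mem_tokenOffsets hu (hfn u) han (hexc u) h₁ h₂)
  simpa using mul_sum_le_card_of_disjoint
    (fun u => (tokenOffsets a (f u)).image fun δ : ℤ => u + (δ : Fin n))
    (fun u hu => by rw [card_image_of_injOn (hinj u hu), card_tokenOffsets hu])
    (fun u v huv hu hv => disjoint_left.mpr fun x hx hx' => by
      obtain ⟨δ₁, h₁, rfl⟩ := mem_image.mp hx
      obtain ⟨δ₂, h₂, heq⟩ := mem_image.mp hx'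
      have := dist_le_max_of_add_eq hao ha han' hu hv h₁ h₂ heq.symm
      have := hindep u v huv hu hv
      omega)

end circulantGraph

theorem stmt16_general (n a : ℕ) (hne : Even n) (hao : Odd a)
    (ha : 3 ≤ a) (han : a ≤ n / 2) :
    betaB (circulantGraph n a) = n / 2 ∧
    alphaNum (circulantGraph n a) = n / 2 := by
  have hn₂ : 2 ≤ n := by omega
  have : NeZero n := ⟨by omega⟩
  have : Nontrivial (Fin n) := Fin.nontrivial_iff_two_le.mpr hn₂
  have hconn := circulantGraph.connected (a := a) hn₂
  have hbound (f : Fin n → ℕ) (hf : IsIndepBroadcast (circulantGraph n a) f) :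
      ∑ v, f v ≤ n / 2 := by
    have := circulantGraph.two_mul_sum_le_of_isIndepBroadcast hao ha han hf
    omega
  obtain ⟨E, hE, hEcard⟩ := circulantGraph.exists_indep_card_eq_half hne hao
  constructor
  · refine IsGreatest.csSup_eq
      ⟨⟨_, isIndepBroadcast_indicator hconn hE, by simpa using hEcard⟩, ?_⟩
    rintro k ⟨f, hf, rfl⟩
    exact hbound f hf
  · refine IsGreatest.csSup_eq ⟨⟨E, hE, hEcard⟩, ?_⟩
    rintro k ⟨s, hs, rfl⟩
    simpa using hbound _ (isIndepBroadcast_indicator hconn hs)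

theorem stmt16 (n a : ℕ) (hne : Even n) (hn : 6 ≤ n) (hao : Odd a)
    (ha : 3 ≤ a) (han : a ≤ n / 2) :
    betaB (circulantGraph n a) = n / 2 ∧
    alphaNum (circulantGraph n a) = n / 2 :=
  stmt16_general n a hne hao ha han
end

section
/- For every integer n ≥ 8, β_b(C(n;1,4)) = α(C(n;1,4)) = ⌊2n/5⌋. -/
/-!
For the upper bound, a vertex at forward offset `g` on the cycle is within distance
`⌊(g + 6) / 4⌋` (steps of `+4`, then `±1`). If `a, b, c` are cyclically consecutive vertices of
positive broadcast value, each gap around `b` is therefore at least `4 f(b) - 2`; gaps `1` and `4`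
are edges, and gaps `2, 2` would make `a` and `c` adjacent, so the two gaps sum to at least
`5 f(b)`. Summing over the support counts every gap twice: `5 ∑ f ≤ 2n`.

For the lower bound, the `m = ⌊2n/5⌋` points `⌊i n / m⌋` have cyclic gaps in `{2, 3}` and any two
consecutive gaps sum to at least `5`, so no two of them differ by `±1` or `±4`. An independent set
is a broadcast of value `1` on each of its vertices.
-/

lemma Fin.val_sub_eq_iff {n : ℕ} {x y : Fin n} {c : ℕ} (hc : c < n) :
    (y - x).val = c ↔ (x.val + c) % n = y.val := by
  have : NeZero n := ⟨by omega⟩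
  calc (y - x).val = c ↔ y - x = ⟨c, hc⟩ := by rw [Fin.ext_iff]
    _ ↔ y = x + ⟨c, hc⟩ := sub_eq_iff_eq_add'
    _ ↔ (x.val + c) % n = y.val := by rw [Fin.ext_iff, Fin.val_add, eq_comm]

lemma Fin.val_sub_add_val_sub {n : ℕ} {x y : Fin n} (h : x ≠ y) :
    (y - x).val + (x - y).val = n := by
  rcases lt_or_gt_of_ne h with h | h
  · rw [Fin.coe_sub_iff_le.2 h.le, Fin.coe_sub_iff_lt.2 h]
    have := y.isLt
    omega
  · rw [Fin.coe_sub_iff_lt.2 h, Fin.coe_sub_iff_le.2 h.le]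
    have := x.isLt
    omega

lemma Fin.val_nsmul_one {n : ℕ} [NeZero n] (a : ℕ) : (a • (1 : Fin n)).val = a % n := by
  induction a with
  | zero => simp
  | succ a ih => rw [succ_nsmul, Fin.val_add, ih, Fin.val_one', ← Nat.add_mod]

lemma Fin.val_nsmul_one_eq_self {n : ℕ} [NeZero n] (x : Fin n) : x.val • (1 : Fin n) = x :=
  Fin.ext <| by rw [Fin.val_nsmul_one, Nat.mod_eq_of_lt x.isLt]

lemma Fin.sum_val_sub_succ_of_strictMono {n k : ℕ} {u : Fin (k + 2) → Fin n}
    (hu : StrictMono u) : ∑ j, (u (j + 1) - u j).val = n := by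
  -- the cyclic successor `j + 1` drops below `j` exactly once, at `j = last`
  have hgap : ∀ j, ((u (j + 1) - u j).val : ℤ) =
      (u (j + 1)).val - (u j).val + if j = Fin.last _ then (n : ℤ) else 0 := by
    intro j
    split_ifs with h
    · rw [Fin.coe_sub_iff_lt.2 (hu (Fin.add_one_lt_iff.2 h))]
      have := (u j).isLt
      omega
    · have hle : u j ≤ u (j + 1) := hu.monotone (not_lt.1 (mt Fin.add_one_lt_iff.1 h))
      rw [Fin.coe_sub_iff_le.2 hle]
      omega
  have hshift : ∑ j, ((u (j + 1)).val : ℤ) = ∑ j, ((u j).val : ℤ) :=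
    Fintype.sum_equiv (Equiv.addRight 1) _ _ fun _ => rfl
  zify
  simp only [hgap, Finset.sum_add_distrib, Finset.sum_sub_distrib, hshift, sub_self, zero_add,
    Finset.sum_ite_eq', Finset.mem_univ, if_true]

lemma two_le_mul_div_sub_mul_div {m n i j : ℕ} (hm0 : 0 < m) (hm : 5 * m ≤ 2 * n)
    (hm' : n ≤ 3 * m) (hij : i < j) :
    2 ≤ j * n / m - i * n / m ∧ j * n / m - i * n / m ≠ 4 := by
  obtain ⟨k, rfl⟩ : ∃ k, j = i + (k + 1) := ⟨j - i - 1, by omega⟩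
  have ha1 := Nat.div_mul_le_self (i * n) m
  have ha2 := Nat.lt_mul_div_succ (i * n) hm0
  have hb1 := Nat.div_mul_le_self ((i + (k + 1)) * n) m
  have hb2 := Nat.lt_mul_div_succ ((i + (k + 1)) * n) hm0
  generalize i * n / m = a at *
  generalize (i + (k + 1)) * n / m = b at *
  have hN : n ≤ (k + 1) * n := by nlinarith
  constructor
  · by_contra h
    have : b ≤ a + 1 := by omega
    nlinarith
  · intro h
    obtain rfl : b = a + 4 := by omega
    rcases k with _ | k <;> nlinarith

def evenlySpaced (n m : ℕ) [NeZero n] (i : Fin m) : Fin n :=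
  ⟨i * n / m, Nat.div_lt_of_lt_mul <| (Nat.mul_lt_mul_right (NeZero.pos n)).2 i.isLt⟩

lemma evenlySpaced_strictMono {n m : ℕ} [NeZero n] (hm : 5 * m ≤ 2 * n) (hm' : n ≤ 3 * m) :
    StrictMono (evenlySpaced n m) := fun i j hij => by
  have := (two_le_mul_div_sub_mul_div (by omega) hm hm' hij).1
  show i.val * n / m < j.val * n / m
  omega

namespace SimpleGraph

variable {V : Type*} {G : SimpleGraph V}

lemma exists_walk_add_nsmul [AddMonoid V] {s : V} (hs : ∀ y, G.Adj y (y + s)) (x : V) (a : ℕ) :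
    ∃ p : G.Walk x (x + a • s), p.length = a := by
  induction a with
  | zero => exact ⟨Walk.nil.copy rfl (by simp), by simp⟩
  | succ a ih =>
    obtain ⟨p, hp⟩ := ih
    refine ⟨(p.concat (hs _)).copy rfl (by rw [succ_nsmul, add_assoc]), ?_⟩
    simp [hp]

lemma dist_add_nsmul_add_nsmul_le [AddMonoid V] {s t : V} (hs : ∀ y, G.Adj y (y + s))
    (ht : ∀ y, G.Adj y (y + t)) (x : V) (a b : ℕ) : G.dist x (x + a • s + b • t) ≤ a + b := by
  obtain ⟨p, hp⟩ := exists_walk_add_nsmul hs x a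
  obtain ⟨q, hq⟩ := exists_walk_add_nsmul ht (x + a • s) b
  simpa [hp, hq] using dist_le (p.append q)

lemma adj_add_neg_of_adj_add [AddGroup V] {s : V} (hs : ∀ y, G.Adj y (y + s)) (y : V) :
    G.Adj y (y + -s) := by
  simpa using (hs (y + -s)).symm

end SimpleGraph

namespace IsIndepBroadcast

variable {V : Type*} [Fintype V] {G : SimpleGraph V} {f : V → ℕ}

lemma not_adj (hf : IsIndepBroadcast G f) {u v : V} (hu : 0 < f u) (hv : 0 < f v) :
    ¬ G.Adj u v := fun h => by
  have := hf.2 u v h.ne hu hv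
  rw [SimpleGraph.dist_eq_one_iff_adj.2 h] at this
  omega

lemma of_indep [DecidableEq V] [Nontrivial V] (hG : G.Connected) {s : Finset V}
    (hs : ∀ u ∈ s, ∀ v ∈ s, ¬ G.Adj u v) :
    IsIndepBroadcast G (fun v => if v ∈ s then 1 else 0) := by
  refine ⟨fun v => ?_, fun u v huv hu hv => ?_⟩
  · obtain ⟨w, hw⟩ := exists_ne v
    calc (if v ∈ s then 1 else 0) ≤ 1 := by split_ifs <;> omega
      _ ≤ G.dist v w := hG.pos_dist_of_ne hw.symm
      _ ≤ eccent G v := Finset.le_sup (f := G.dist v) (Finset.mem_univ w)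
  · have hu : u ∈ s := by by_contra h; simp [h] at hu
    have hv : v ∈ s := by by_contra h; simp [h] at hv
    have h1 := hG.pos_dist_of_ne huv
    have h2 : G.dist u v ≠ 1 := fun h => hs u hu v hv (SimpleGraph.dist_eq_one_iff_adj.1 h)
    simp only [hu, hv, if_true, max_self]
    omega

end IsIndepBroadcast

section

variable {n : ℕ} [NeZero n]

lemma circulantGraph_four_adj_iff (hn : 5 ≤ n) {x y : Fin n} :
    (circulantGraph n 4).Adj x y ↔
      (y - x).val = 1 ∨ (y - x).val = 4 ∨ (x - y).val = 1 ∨ (x - y).val = 4 := by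
  simp only [circulantGraph, SimpleGraph.fromRel_adj, ← Fin.val_sub_eq_iff (show 1 < n by omega),
    ← Fin.val_sub_eq_iff (show 4 < n by omega)]
  constructor
  · rintro ⟨-, h | h⟩ <;> tauto
  · intro h
    refine ⟨?_, by tauto⟩
    rintro rfl
    simp at h

lemma circulantGraph_four_adj_add (hn : 5 ≤ n) {a : ℕ} (ha : a = 1 ∨ a = 4) (x : Fin n) :
    (circulantGraph n 4).Adj x (x + a • 1) := by
  rw [circulantGraph_four_adj_iff hn, add_sub_cancel_left, Fin.val_nsmul_one,
    Nat.mod_eq_of_lt (by omega)]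
  omega

lemma circulantGraph_four_connected (hn : 5 ≤ n) : (circulantGraph n 4).Connected := by
  refine SimpleGraph.connected_iff_exists_forall_reachable _ |>.2 ⟨0, fun y => ?_⟩
  obtain ⟨p, -⟩ := SimpleGraph.exists_walk_add_nsmul
    (circulantGraph_four_adj_add hn (a := 1) (by omega)) 0 y.val
  rw [one_nsmul, zero_add, Fin.val_nsmul_one_eq_self] at p
  exact ⟨p⟩

lemma circulantGraph_four_dist_le (hn : 5 ≤ n) (x y : Fin n) :
    (circulantGraph n 4).dist x y ≤ ((y - x).val + 6) / 4 := by
  have h1 := circulantGraph_four_adj_add hn (a := 1) (by omega)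
  have h4 := circulantGraph_four_adj_add hn (a := 4) (by omega)
  obtain ⟨q, r, hr, hg⟩ : ∃ q r, r < 4 ∧ (y - x).val = r + 4 * q :=
    ⟨(y - x).val / 4, (y - x).val % 4, Nat.mod_lt _ (by omega), (Nat.mod_add_div _ 4).symm⟩
  have hy : y = x + (r + 4 * q) • 1 := by rw [← hg, Fin.val_nsmul_one_eq_self, add_sub_cancel]
  rw [hg]
  by_cases hr3 : r = 3
  · -- overshoot by `q + 1` steps of `+4`, then take one step back
    subst hr3
    have hy' : y = x + (q + 1) • ((4 : ℕ) • (1 : Fin n)) + (1 : ℕ) • -((1 : ℕ) • (1 : Fin n)) := by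
      rw [hy, ← mul_nsmul, show 4 * (q + 1) = (3 + 4 * q) + 1 by ring, succ_nsmul]
      simp only [one_nsmul]
      abel
    rw [hy']
    exact (SimpleGraph.dist_add_nsmul_add_nsmul_le h4 (SimpleGraph.adj_add_neg_of_adj_add h1) x
      (q + 1) 1).trans (by omega)
  · have hy' : y = x + q • ((4 : ℕ) • (1 : Fin n)) + r • ((1 : ℕ) • (1 : Fin n)) := by
      rw [hy, add_nsmul, ← mul_nsmul, one_nsmul, mul_comm]
      abel
    rw [hy']
    exact (SimpleGraph.dist_add_nsmul_add_nsmul_le h4 h1 x q r).trans (by omega)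

lemma circulantGraph_four_five_mul_eccent_le (hn : 5 ≤ n) (v : Fin n) :
    5 * eccent (circulantGraph n 4) v ≤ 2 * n := by
  suffices h : ∀ w, 8 * (circulantGraph n 4).dist v w ≤ n + 12 by
    have : eccent (circulantGraph n 4) v ≤ (n + 12) / 8 :=
      Finset.sup_le fun w _ => by have := h w; omega
    omega
  intro w
  rcases eq_or_ne v w with rfl | hvw
  · simp
  · have h1 := circulantGraph_four_dist_le hn v w
    have h2 := circulantGraph_four_dist_le hn w v
    rw [SimpleGraph.dist_comm] at h2
    have := Fin.val_sub_add_val_sub hvw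
    omega

lemma circulantGraph_four_not_adj_evenlySpaced {m : ℕ} (hm : 5 * m ≤ 2 * n) (hm' : n ≤ 3 * m)
    (i j : Fin m) : ¬ (circulantGraph n 4).Adj (evenlySpaced n m i) (evenlySpaced n m j) := by
  wlog hij : i < j generalizing i j
  · rcases (not_lt.1 hij).lt_or_eq with h | rfl
    · exact fun h' => this j i h h'.symm
    · exact SimpleGraph.irrefl _
  have hlt := evenlySpaced_strictMono hm hm' hij
  have hfwd := two_le_mul_div_sub_mul_div (by omega) hm hm' hij
  have hback := two_le_mul_div_sub_mul_div (by omega) hm hm' (show j.val < i.val + m by omega)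
  rw [add_mul, Nat.add_mul_div_left _ _ (by omega)] at hback
  rw [circulantGraph_four_adj_iff (by omega), Fin.coe_sub_iff_le.2 hlt.le,
    Fin.coe_sub_iff_lt.2 hlt]
  simp only [evenlySpaced]
  have := (evenlySpaced n m j).isLt
  omega

namespace IsIndepBroadcast

variable {f : Fin n → ℕ}

lemma circulantGraph_four_five_mul_le (hn : 5 ≤ n) (hf : IsIndepBroadcast (circulantGraph n 4) f)
    {a b c : Fin n} (hab : a ≠ b) (hbc : b ≠ c) (ha : 0 < f a) (hb : 0 < f b) (hc : 0 < f c) :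
    5 * f b ≤ (b - a).val + (c - b).val := by
  have hgap : ∀ {u v}, u ≠ v → 0 < f u → 0 < f v →
      4 * max (f u) (f v) ≤ (v - u).val + 2 ∧ (v - u).val ≠ 4 := by
    intro u v huv hu hv
    have := (hf.2 u v huv hu hv).trans_le (circulantGraph_four_dist_le hn u v)
    have := hf.not_adj hu hv
    rw [circulantGraph_four_adj_iff hn] at this
    omega
  have hac : ¬ ((b - a).val = 2 ∧ (c - b).val = 2) := by
    rintro ⟨h1, h2⟩
    apply hf.not_adj ha hc
    rw [circulantGraph_four_adj_iff hn, ← sub_add_sub_cancel c b a, Fin.val_add, h1, h2,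
      Nat.mod_eq_of_lt (by omega)]
    omega
  have := hgap hab ha hb
  have := hgap hbc hb hc
  have := le_max_left (f b) (f c)
  have := le_max_right (f a) (f b)
  omega

lemma circulantGraph_four_five_mul_sum_le (hn : 5 ≤ n)
    (hf : IsIndepBroadcast (circulantGraph n 4) f) : 5 * ∑ v, f v ≤ 2 * n := by
  classical
  rw [← Finset.sum_filter_of_ne fun v _ hv => Nat.pos_of_ne_zero hv]
  set s := Finset.univ.filter (fun v => 0 < f v)
  have hs : ∀ v ∈ s, 0 < f v := fun v hv => (Finset.mem_filter.1 hv).2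
  match hk : s.card with
  | 0 => simp [Finset.card_eq_zero.1 hk]
  | 1 =>
    obtain ⟨a, ha⟩ := Finset.card_eq_one.1 hk
    have := hf.1 a
    have := circulantGraph_four_five_mul_eccent_le hn a
    simp only [ha, Finset.sum_singleton]
    omega
  | k + 2 =>
    set u := s.orderEmbOfFin hk
    have hu : ∀ j, 0 < f (u j) := fun j => hs _ (s.orderEmbOfFin_mem hk j)
    have hpair : ∀ j, 5 * f (u j) ≤ (u (j - 1 + 1) - u (j - 1)).val + (u (j + 1) - u j).val := by
      intro j
      rw [sub_add_cancel]
      exact hf.circulantGraph_four_five_mul_le hn (u.injective.ne (by simp))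
        (u.injective.ne (by simp)) (hu _) (hu _) (hu _)
    have hshift : ∑ j, (u (j - 1 + 1) - u (j - 1)).val = ∑ j, (u (j + 1) - u j).val :=
      Fintype.sum_equiv (Equiv.subRight 1) _ _ fun _ => rfl
    calc 5 * ∑ v ∈ s, f v = ∑ j, 5 * f (u j) := by
          rw [← s.map_orderEmbOfFin_univ hk, Finset.sum_map, Finset.mul_sum]
          rfl
      _ ≤ ∑ j, ((u (j - 1 + 1) - u (j - 1)).val + (u (j + 1) - u j).val) :=
          Finset.sum_le_sum fun j _ => hpair j
      _ = 2 * n := by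
          rw [Finset.sum_add_distrib, hshift, Fin.sum_val_sub_succ_of_strictMono u.strictMono]
          ring

end IsIndepBroadcast

end

theorem stmt18 (n : ℕ) (hn : 8 ≤ n) :
    betaB (circulantGraph n 4) = 2 * n / 5 ∧
    alphaNum (circulantGraph n 4) = 2 * n / 5 := by
  have : NeZero n := ⟨by omega⟩
  have : Nontrivial (Fin n) := Fin.nontrivial_iff_two_le.2 (by omega)
  have hn5 : 5 ≤ n := by omega
  have hconn := circulantGraph_four_connected hn5
  have hm : 5 * (2 * n / 5) ≤ 2 * n := by omega
  have hm' : n ≤ 3 * (2 * n / 5) := by omega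
  set T := Finset.univ.map ⟨_, (evenlySpaced_strictMono hm hm').injective⟩
  have hT : ∀ u ∈ T, ∀ v ∈ T, ¬ (circulantGraph n 4).Adj u v := by
    simp only [T, Finset.mem_map, Finset.mem_univ, true_and, Function.Embedding.coeFn_mk]
    rintro _ ⟨i, rfl⟩ _ ⟨j, rfl⟩
    exact circulantGraph_four_not_adj_evenlySpaced hm hm' i j
  have hTcard : T.card = 2 * n / 5 := by simp [T]
  refine ⟨IsGreatest.csSup_eq ⟨⟨_, .of_indep hconn hT, by simpa [Finset.sum_boole]⟩, ?_⟩,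
    IsGreatest.csSup_eq ⟨⟨T, hT, hTcard⟩, ?_⟩⟩
  · rintro _ ⟨f, hf, rfl⟩
    have := hf.circulantGraph_four_five_mul_sum_le hn5
    omega
  · rintro _ ⟨s, hs, rfl⟩
    have := (IsIndepBroadcast.of_indep hconn hs).circulantGraph_four_five_mul_sum_le hn5
    simp only [Finset.sum_boole, Finset.filter_mem_eq_inter, Finset.univ_inter,
      Nat.cast_id] at this
    omega
end
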